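/- arXiv:math/9905033 — 2 statements merged into one kernel-verified Lean document; each statement's English description precedes it below -/
import Mathlib

section
/- Let V be a vector space of dimension m over a field of characteristic zero, and λ a partition of d with λ_{n'} > 0 and λ_{n'+1} = 0 (i.e. λ has exactly n' nonzero parts). Then the Schur functor V^λ = (V^{⊗d} ⊗ U^λ)^{S_d} is zero if and only if m < n'. -/
open scoped TensorProduct

noncomputable section

/-- The permutation action of `σ ∈ S_d` on the `d`-th tensor power `V^{⊗d}`. -/
def permTensor (K : Type*) [Field K] (V : Type*) [AddCommGroup V] [Module K V]
    (d : ℕ) (σ : Equiv.Perm (Fin d)) :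
    (⨂[K] _ : Fin d, V) →ₗ[K] ⨂[K] _ : Fin d, V :=
  (PiTensorProduct.reindex K (fun _ => V) σ).toLinearMap

/-- Partial sums `λ_0 + ⋯ + λ_{i-1}` of a partition. -/
def psum (lam : ℕ → ℕ) (i : ℕ) : ℕ := ∑ j ∈ Finset.range i, lam j

/-- The (0-based) row index of the `p`-th cell in the canonical row-by-row
filling of the Young diagram of `λ`. -/
def rowOf (d : ℕ) (lam : ℕ → ℕ) (p : ℕ) : ℕ :=
  ((Finset.range d).filter (fun i => psum lam (i + 1) ≤ p)).card

/-- The (0-based) column index of the `p`-th cell in the canonical filling of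
the Young diagram of `λ`. -/
def colOf (d : ℕ) (lam : ℕ → ℕ) (p : ℕ) : ℕ := p - psum lam (rowOf d lam p)

/-- The Young symmetrizer of the partition `λ` of `d`, acting on `V^{⊗d}`:
`c_λ = ∑_{σ ∈ P_λ, τ ∈ Q_λ} sign(τ) · (σ τ)` where `P_λ` (resp. `Q_λ`) is the
subgroup of permutations preserving the rows (resp. columns) of the canonical
tableau of `λ`. -/
def youngSym (K : Type*) [Field K] (V : Type*) [AddCommGroup V] [Module K V]
    (d : ℕ) (lam : ℕ → ℕ) :
    (⨂[K] _ : Fin d, V) →ₗ[K] ⨂[K] _ : Fin d, V :=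
  ∑ σ : Equiv.Perm (Fin d), ∑ τ : Equiv.Perm (Fin d),
    if (∀ p : Fin d, rowOf d lam (σ p : ℕ) = rowOf d lam (p : ℕ)) ∧
        (∀ p : Fin d, colOf d lam (τ p : ℕ) = colOf d lam (p : ℕ)) then
      (Equiv.Perm.sign τ : ℤ) • permTensor K V d (σ * τ)
    else 0

/-- The Schur functor `V^λ`, realised as the image of the Young symmetrizer
`c_λ` acting on `V^{⊗d}`. -/
def schurY (K : Type*) [Field K] (V : Type*) [AddCommGroup V] [Module K V]
    (d : ℕ) (lam : ℕ → ℕ) : Submodule K (⨂[K] _ : Fin d, V) :=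
  LinearMap.range (youngSym K V d lam)

namespace SchurAux

lemma downclosed_eq_range {s : Finset ℕ}
    (h : ∀ ⦃i j : ℕ⦄, j ≤ i → i ∈ s → j ∈ s) : s = Finset.range s.card := by
  have hsub : s ⊆ Finset.range s.card := by
    intro x hx
    have hr : Finset.range (x + 1) ⊆ s := fun j hj =>
      h (Nat.lt_succ_iff.mp (Finset.mem_range.mp hj)) hx
    have := Finset.card_le_card hr
    rw [Finset.card_range] at this
    exact Finset.mem_range.mpr this
  exact Finset.eq_of_subset_of_card_le hsub (by simp)

variable {d n' : ℕ} {lam : ℕ → ℕ}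

lemma psum_mono : Monotone (psum lam) := fun i j h =>
  Finset.sum_le_sum_of_subset (Finset.range_subset_range.mpr h)

section
variable (hsum : ∑ i ∈ Finset.range d, lam i = d)
    (hzero : ∀ i, d ≤ i → lam i = 0) (hparts : ∀ i, lam i ≠ 0 ↔ i < n')

include hzero hparts in
lemma n'_le_d : n' ≤ d := by
  by_contra h
  exact ((hparts d).mpr (lt_of_not_ge h)) (hzero d le_rfl)

include hparts in
lemma lam_pos {i : ℕ} (hi : i < n') : 0 < lam i :=
  Nat.pos_of_ne_zero ((hparts i).mpr hi)

include hparts in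
lemma psum_lt_psum {i j : ℕ} (hij : i < j) (hj : j ≤ n') : psum lam i < psum lam j := by
  have h1 : psum lam i < psum lam (i + 1) := by
    have := lam_pos hparts (lt_of_lt_of_le hij hj)
    simp [psum, Finset.sum_range_succ]
    omega
  exact lt_of_lt_of_le h1 (psum_mono hij)

include hsum hzero hparts in
lemma psum_n' : psum lam n' = d := by
  have hle := n'_le_d hzero hparts
  have : psum lam d = psum lam n' := by
    refine (Finset.sum_subset (Finset.range_subset_range.mpr hle) ?_).symm
    intro x _ hx
    simp only [Finset.mem_range, not_lt] at hx
    exact not_not.mp (fun h => ((hparts x).mp h).not_ge hx)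
  rw [← this]; exact hsum

lemma filter_eq_range (p : ℕ) :
    (Finset.range d).filter (fun i => psum lam (i + 1) ≤ p) =
      Finset.range (rowOf d lam p) := by
  apply downclosed_eq_range
  intro i j hji hi
  simp only [Finset.mem_filter, Finset.mem_range] at hi ⊢
  exact ⟨lt_of_le_of_lt hji hi.1, le_trans (psum_mono (by omega)) hi.2⟩

lemma psum_rowOf_le (p : ℕ) : psum lam (rowOf d lam p) ≤ p := by
  rcases Nat.eq_zero_or_pos (rowOf d lam p) with h | h
  · simp [h, psum]
  · have : rowOf d lam p - 1 ∈ Finset.range (rowOf d lam p) := by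
      simp; omega
    rw [← filter_eq_range p] at this
    simp only [Finset.mem_filter] at this
    have h2 := this.2
    rwa [Nat.sub_add_cancel h] at h2

end
end SchurAux
namespace SchurAux
variable {d n' : ℕ} {lam : ℕ → ℕ}
variable (hsum : ∑ i ∈ Finset.range d, lam i = d)
    (hzero : ∀ i, d ≤ i → lam i = 0) (hparts : ∀ i, lam i ≠ 0 ↔ i < n')

include hsum hzero hparts in
lemma lt_psum_rowOf_succ {p : ℕ} (hp : p < d) : p < psum lam (rowOf d lam p + 1) := by
  rcases lt_or_ge (rowOf d lam p) d with h | h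
  · by_contra hc
    push_neg at hc
    have : rowOf d lam p ∈ Finset.range (rowOf d lam p) := by
      rw [← filter_eq_range p]
      simp only [Finset.mem_filter, Finset.mem_range]
      exact ⟨h, hc⟩
    simp at this
  · have h1 : psum lam n' ≤ psum lam (rowOf d lam p + 1) :=
      psum_mono (le_trans (n'_le_d hzero hparts) (by omega))
    rw [psum_n' hsum hzero hparts] at h1
    omega

include hsum hzero hparts in
lemma rowOf_lt_n' {p : ℕ} (hp : p < d) : rowOf d lam p < n' := by
  by_contra hc
  push_neg at hc
  have h1 : psum lam n' ≤ psum lam (rowOf d lam p) := psum_mono hc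
  rw [psum_n' hsum hzero hparts] at h1
  have := psum_rowOf_le (d := d) (lam := lam) p
  omega

include hsum hzero hparts in
lemma rowOf_unique {p r : ℕ} (hp : p < d) (h1 : psum lam r ≤ p) (h2 : p < psum lam (r + 1)) :
    rowOf d lam p = r := by
  rcases lt_trichotomy (rowOf d lam p) r with h | h | h
  · have h3 : psum lam (rowOf d lam p + 1) ≤ psum lam r := psum_mono (by omega)
    have h4 := lt_psum_rowOf_succ hsum hzero hparts hp
    omega
  · exact h
  · have h3 : psum lam (r + 1) ≤ psum lam (rowOf d lam p) := psum_mono (by omega)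
    have h4 := psum_rowOf_le (d := d) (lam := lam) p
    omega

include hsum hzero hparts in
lemma psum_lt_d {i : ℕ} (hi : i < n') : psum lam i < d := by
  have := psum_lt_psum hparts hi (le_refl n')
  rw [psum_n' hsum hzero hparts] at this; exact this

include hsum hzero hparts in
lemma rowOf_psum {i : ℕ} (hi : i < n') : rowOf d lam (psum lam i) = i := by
  refine rowOf_unique hsum hzero hparts (psum_lt_d hsum hzero hparts hi) le_rfl ?_
  exact psum_lt_psum hparts (Nat.lt_succ_self i) hi

include hsum hzero hparts in
lemma colOf_psum {i : ℕ} (hi : i < n') : colOf d lam (psum lam i) = 0 := by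
  simp [colOf, rowOf_psum hsum hzero hparts hi]

omit hsum hzero hparts in
lemma pos_inj {p q : ℕ}
    (hrow : rowOf d lam p = rowOf d lam q) (hcol : colOf d lam p = colOf d lam q) :
    p = q := by
  have h1 := psum_rowOf_le (d := d) (lam := lam) p
  have h2 := psum_rowOf_le (d := d) (lam := lam) q
  have e1 : p = psum lam (rowOf d lam p) + colOf d lam p := by simp [colOf]; omega
  have e2 : q = psum lam (rowOf d lam q) + colOf d lam q := by simp [colOf]; omega
  rw [e1, e2, hrow, hcol]

end SchurAux

namespace SchurAux

lemma ite_apply_lm {K : Type*} [Field K] {M N : Type*} [AddCommGroup M] [Module K M]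
    [AddCommGroup N] [Module K N] (c : Prop) [Decidable c] (f g : M →ₗ[K] N) (x : M) :
    (if c then f else g) x = if c then f x else g x := by split <;> rfl

lemma permTensor_tprod (K : Type*) [Field K] (V : Type*) [AddCommGroup V] [Module K V]
    (d : ℕ) (σ : Equiv.Perm (Fin d)) (f : Fin d → V) :
    permTensor K V d σ (PiTensorProduct.tprod K f) =
      PiTensorProduct.tprod K (fun i => f (σ.symm i)) :=
  PiTensorProduct.reindex_tprod (s := fun _ => V) σ f

end SchurAux

set_option maxHeartbeats 2000000 in
/-- Let `V` be an `m`-dimensional vector space over a field of characteristic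
zero and `λ` a partition of `d` with exactly `n'` nonzero parts.  Then the
Schur functor `V^λ` is zero if and only if `m < n'`. -/
theorem stmt_3 (K : Type*) [Field K] [CharZero K]
    (V : Type*) [AddCommGroup V] [Module K V] [FiniteDimensional K V]
    (m d n' : ℕ) (hm : Module.finrank K V = m)
    (lam : ℕ → ℕ) (hanti : Antitone lam)
    (hsum : ∑ i ∈ Finset.range d, lam i = d)
    (hzero : ∀ i, d ≤ i → lam i = 0)
    (hparts : ∀ i, lam i ≠ 0 ↔ i < n') :
    schurY K V d lam = ⊥ ↔ m < n' := by
  subst hm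
  classical
  set b := Module.finBasis K V with hb
  constructor
  · -- forward: schurY = ⊥ → finrank < n'
    intro hbot
    by_contra hge
    push_neg at hge
    have hrow_lt : ∀ p : Fin d, rowOf d lam (p : ℕ) < Module.finrank K V := fun p =>
      lt_of_lt_of_le (SchurAux.rowOf_lt_n' hsum hzero hparts p.2) hge
    set e : Fin d → Fin (Module.finrank K V) :=
      fun p => ⟨rowOf d lam (p : ℕ), hrow_lt p⟩ with he
    set w := youngSym K V d lam ((PiTensorProduct.tprod K) fun p => b (e p)) with hw
    have hwmem : w ∈ schurY K V d lam := ⟨_, rfl⟩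
    rw [hbot, Submodule.mem_bot] at hwmem
    set φ := PiTensorProduct.lift
      ((MultilinearMap.mkPiAlgebra K (Fin d) K).compLinearMap fun p => b.coord (e p)) with hφ
    have hφt : ∀ g : Fin d → Fin (Module.finrank K V),
        φ (PiTensorProduct.tprod K fun p => b (g p)) = if ∀ p, g p = e p then (1 : K) else 0 := by
      intro g
      rw [hφ, PiTensorProduct.lift.tprod]
      simp only [MultilinearMap.compLinearMap_apply, MultilinearMap.mkPiAlgebra_apply]
      simp only [Module.Basis.coord_apply, Module.Basis.repr_self, Finsupp.single_apply]
      rw [Fintype.prod_boole]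
      by_cases h : ∀ p : Fin d, g p = e p
      · rw [if_pos h, if_pos h]
      · rw [if_neg h, if_neg h]
    have hrowinv : ∀ σ : Equiv.Perm (Fin d),
        (∀ p : Fin d, rowOf d lam ((σ p : Fin d) : ℕ) = rowOf d lam (p : ℕ)) →
        ∀ p : Fin d, rowOf d lam ((σ⁻¹ p : Fin d) : ℕ) = rowOf d lam (p : ℕ) := by
      intro σ hσ p
      have h0 := hσ (σ⁻¹ p)
      rw [show σ (σ⁻¹ p) = p from σ.apply_symm_apply p] at h0
      exact h0.symm
    have hφw : φ w = ((Finset.univ.filter fun σ : Equiv.Perm (Fin d) =>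
        ∀ p : Fin d, rowOf d lam ((σ p : Fin d) : ℕ) = rowOf d lam (p : ℕ)).card : K) := by
      rw [hw, youngSym]
      simp only [LinearMap.sum_apply, SchurAux.ite_apply_lm, LinearMap.smul_apply,
        LinearMap.zero_apply, map_sum, apply_ite (fun x => φ x), map_zsmul, map_zero,
        SchurAux.permTensor_tprod, hφt]
      simp only [show ∀ (z : ℤ) (f : (⨂[K] _ : Fin d, V) →ₗ[K] ⨂[K] _ : Fin d, V) x,
          (z • f) x = z • f x from fun _ _ _ => rfl, map_zsmul, SchurAux.permTensor_tprod, hφt]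
      rw [← Finset.sum_boole]
      apply Finset.sum_congr rfl
      intro σ _
      have hstep : ∀ τ : Equiv.Perm (Fin d),
          (if (∀ p : Fin d, rowOf d lam ((σ p : Fin d) : ℕ) = rowOf d lam (p : ℕ)) ∧
              (∀ p : Fin d, colOf d lam ((τ p : Fin d) : ℕ) = colOf d lam (p : ℕ)) then
            (Equiv.Perm.sign τ : ℤ) •
              (if ∀ p : Fin d, e (((σ * τ) : Equiv.Perm (Fin d)).symm p) = e p then (1 : K) else 0)
          else 0) =
          (if (∀ p : Fin d, rowOf d lam ((σ p : Fin d) : ℕ) = rowOf d lam (p : ℕ)) then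
            (if τ = 1 then (1 : K) else 0) else 0) := by
        intro τ
        by_cases hrow : ∀ p : Fin d, rowOf d lam ((σ p : Fin d) : ℕ) = rowOf d lam (p : ℕ)
        · rw [if_pos hrow]
          by_cases hτ : τ = 1
          · subst hτ
            rw [if_pos rfl, if_pos ⟨hrow, fun p => rfl⟩]
            have hE : ∀ p : Fin d, e (((σ * 1) : Equiv.Perm (Fin d)).symm p) = e p := by
              intro p
              have h1 : (((σ * 1) : Equiv.Perm (Fin d)).symm p) = σ⁻¹ p := by
                rw [mul_one]; rfl
              rw [h1, he]
              exact Fin.ext (hrowinv σ hrow p)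
            rw [if_pos hE]
            simp
          · rw [if_neg hτ]
            by_cases hcol : ∀ p : Fin d, colOf d lam ((τ p : Fin d) : ℕ) = colOf d lam (p : ℕ)
            · rw [if_pos ⟨hrow, hcol⟩]
              have hE : ¬ ∀ p : Fin d, e (((σ * τ) : Equiv.Perm (Fin d)).symm p) = e p := by
                intro hE
                apply hτ
                ext p
                have h1 : ∀ q : Fin d,
                    rowOf d lam ((((σ * τ) : Equiv.Perm (Fin d)) q : Fin d) : ℕ) =
                      rowOf d lam (q : ℕ) := by
                  intro q
                  have := hE (((σ * τ) : Equiv.Perm (Fin d)) q)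
                  rw [Equiv.symm_apply_apply] at this
                  have h2 := congrArg Fin.val this
                  simpa [he] using h2.symm
                have h3 : rowOf d lam ((τ p : Fin d) : ℕ) = rowOf d lam (p : ℕ) := by
                  have ha := h1 p
                  have hb2 := hrow (τ p)
                  have hc2 : (((σ * τ) : Equiv.Perm (Fin d)) p) = σ (τ p) := rfl
                  rw [hc2] at ha
                  rw [hb2] at ha
                  exact ha
                have h4 := SchurAux.pos_inj (d := d) (lam := lam) h3 (hcol p)
                exact h4
              rw [if_neg hE]
              simp
            · rw [if_neg (fun hand => hcol hand.2)]
        · rw [if_neg (fun hand => hrow hand.1), if_neg hrow]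
      calc (∑ τ : Equiv.Perm (Fin d),
            if (∀ p : Fin d, rowOf d lam ((σ p : Fin d) : ℕ) = rowOf d lam (p : ℕ)) ∧
                (∀ p : Fin d, colOf d lam ((τ p : Fin d) : ℕ) = colOf d lam (p : ℕ)) then
              (Equiv.Perm.sign τ : ℤ) •
                (if ∀ p : Fin d, e (((σ * τ) : Equiv.Perm (Fin d)).symm p) = e p then (1 : K) else 0)
            else 0)
          = ∑ τ : Equiv.Perm (Fin d),
            (if (∀ p : Fin d, rowOf d lam ((σ p : Fin d) : ℕ) = rowOf d lam (p : ℕ)) then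
              (if τ = 1 then (1 : K) else 0) else 0) := Finset.sum_congr rfl fun τ _ => hstep τ
        _ = _ := by
            by_cases hrow : ∀ p : Fin d, rowOf d lam ((σ p : Fin d) : ℕ) = rowOf d lam (p : ℕ)
            · simp [hrow]
            · simp [hrow]
    have hne : φ w ≠ 0 := by
      rw [hφw]
      have hmem : (1 : Equiv.Perm (Fin d)) ∈ (Finset.univ.filter fun σ : Equiv.Perm (Fin d) =>
          ∀ p : Fin d, rowOf d lam ((σ p : Fin d) : ℕ) = rowOf d lam (p : ℕ)) := by
        simp
      have hpos : 0 < (Finset.univ.filter fun σ : Equiv.Perm (Fin d) =>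
          ∀ p : Fin d, rowOf d lam ((σ p : Fin d) : ℕ) = rowOf d lam (p : ℕ)).card :=
        Finset.card_pos.mpr ⟨1, hmem⟩
      exact_mod_cast Nat.cast_ne_zero.mpr hpos.ne'
    rw [hwmem] at hne
    simp at hne
  · -- backward: finrank < n' → schurY = ⊥
    intro hlt
    have hys : youngSym K V d lam = 0 := by
      apply PiTensorProduct.ext
      apply Module.Basis.ext_multilinear (fun _ => b)
      intro v
      simp only [LinearMap.compMultilinearMap_apply, LinearMap.zero_apply]
      obtain ⟨i, j, hij, hvij⟩ := Fintype.exists_ne_map_eq_of_card_lt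
        (fun k : Fin n' => v ⟨psum lam (k : ℕ), SchurAux.psum_lt_d hsum hzero hparts k.2⟩)
        (by simpa using hlt)
      set P : Fin d := ⟨psum lam (i : ℕ), SchurAux.psum_lt_d hsum hzero hparts i.2⟩ with hP
      set Q : Fin d := ⟨psum lam (j : ℕ), SchurAux.psum_lt_d hsum hzero hparts j.2⟩ with hQ
      have hPQ : P ≠ Q := by
        have : psum lam (i : ℕ) ≠ psum lam (j : ℕ) := by
          rcases lt_or_gt_of_ne (fun h => hij (Fin.ext h) : (i : ℕ) ≠ (j : ℕ)) with h | h
          · exact (SchurAux.psum_lt_psum hparts h j.2.le).ne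
          · exact (SchurAux.psum_lt_psum hparts h i.2.le).ne'
        exact fun h => this (congrArg Fin.val h)
      set t := Equiv.swap P Q with ht
      have hvt : ∀ x : Fin d, v (t x) = v x := by
        intro x
        rcases eq_or_ne x P with rfl | hxP
        · rw [ht, Equiv.swap_apply_left]; exact hvij.symm
        rcases eq_or_ne x Q with rfl | hxQ
        · rw [ht, Equiv.swap_apply_right]; exact hvij
        · rw [ht, Equiv.swap_apply_of_ne_of_ne hxP hxQ]
      have hcolP : colOf d lam (P : ℕ) = 0 := SchurAux.colOf_psum hsum hzero hparts i.2
      have hcolQ : colOf d lam (Q : ℕ) = 0 := SchurAux.colOf_psum hsum hzero hparts j.2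
      have hcolt : ∀ x : Fin d, colOf d lam ((t x : Fin d) : ℕ) = colOf d lam (x : ℕ) := by
        intro x
        rcases eq_or_ne x P with rfl | hxP
        · rw [ht, Equiv.swap_apply_left, hcolQ, hcolP]
        rcases eq_or_ne x Q with rfl | hxQ
        · rw [ht, Equiv.swap_apply_right, hcolQ, hcolP]
        · rw [ht, Equiv.swap_apply_of_ne_of_ne hxP hxQ]
      rw [youngSym]
      simp only [LinearMap.sum_apply]
      apply Finset.sum_eq_zero
      intro σ _
      apply Finset.sum_ninvolution (fun τ => τ * t)
      · intro τ
        simp only [SchurAux.ite_apply_lm, LinearMap.zero_apply, LinearMap.smul_apply]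
        simp only [show ∀ (z : ℤ) (f : (⨂[K] _ : Fin d, V) →ₗ[K] ⨂[K] _ : Fin d, V) x,
            (z • f) x = z • f x from fun _ _ _ => rfl]
        by_cases hcol : ∀ p : Fin d, colOf d lam ((τ p : Fin d) : ℕ) = colOf d lam (p : ℕ)
        · have hcol' : ∀ p : Fin d, colOf d lam (((τ * t) p : Fin d) : ℕ) = colOf d lam (p : ℕ) := by
            intro p
            have h1 : ((τ * t) p : Fin d) = τ (t p) := rfl
            rw [h1, hcol (t p), hcolt p]
          by_cases hrow : ∀ p : Fin d, rowOf d lam ((σ p : Fin d) : ℕ) = rowOf d lam (p : ℕ)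
          · rw [if_pos ⟨hrow, hcol⟩, if_pos ⟨hrow, hcol'⟩]
            have hperm : permTensor K V d (σ * (τ * t)) ((PiTensorProduct.tprod K) fun p => b (v p)) =
                permTensor K V d (σ * τ) ((PiTensorProduct.tprod K) fun p => b (v p)) := by
              rw [SchurAux.permTensor_tprod, SchurAux.permTensor_tprod]
              congr 1
              funext x
              have h1 : ((σ * (τ * t)) : Equiv.Perm (Fin d)).symm x =
                  t (((σ * τ) : Equiv.Perm (Fin d)).symm x) := by
                rw [Equiv.symm_apply_eq]
                show x = σ ((τ * t) (t ((σ * τ).symm x)))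
                have h2 : (τ * t) (t (((σ * τ) : Equiv.Perm (Fin d)).symm x)) =
                    τ (((σ * τ) : Equiv.Perm (Fin d)).symm x) := by
                  rw [Equiv.Perm.mul_apply, ht, Equiv.swap_apply_self]
                rw [h2]
                exact (Equiv.apply_symm_apply (σ * τ) x).symm
              rw [h1, hvt]
            rw [hperm]
            have hsign : (Equiv.Perm.sign (τ * t) : ℤ) = -(Equiv.Perm.sign τ : ℤ) := by
              rw [ht, Equiv.Perm.sign_mul, Equiv.Perm.sign_swap hPQ]
              simp
            rw [hsign, neg_smul]
            exact add_neg_cancel _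
          · rw [if_neg (fun h => hrow h.1), if_neg (fun h => hrow h.1)]
            simp
        · have hcol' : ¬ ∀ p : Fin d, colOf d lam (((τ * t) p : Fin d) : ℕ) = colOf d lam (p : ℕ) := by
            intro h
            apply hcol
            intro p
            have h1 : τ p = (τ * t) (t p) := by
              simp [Equiv.Perm.mul_apply, ht, Equiv.swap_apply_self]
            rw [h1, h (t p), hcolt p]
          rw [if_neg (fun h => hcol h.2), if_neg (fun h => hcol' h.2)]
          simp
      · intro τ _
        intro hEq
        have h1 : t = 1 := mul_left_cancel (a := τ) (by rw [mul_one]; exact hEq)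
        have h2 : t P = P := by rw [h1]; rfl
        rw [ht, Equiv.swap_apply_left] at h2
        exact hPQ h2.symm
      · intro τ; exact Finset.mem_univ _
      · intro τ
        rw [mul_assoc, ht, Equiv.swap_mul_self, mul_one]
    rw [schurY, hys, LinearMap.range_zero]

end
end

section
/- Let M be a projective module over the polynomial ring R[t] (R a commutative ring) and s ∈ M. Embed M as a direct summand of a free R[t]-module M' with basis B; write s = Σ_{b∈B} s_b · b with s_b ∈ R[t], and let {s_{b,i} ∈ R} be the coefficients of all the polynomials s_b. Then for any R-algebra R', the image of s in M ⊗_{R[t]} R'[t] vanishes if and only if every s_{b,i} maps to zero in R'. Consequently, the locus where the section s vanishes is a closed subscheme of Spec R. -/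
/-!
Tensoring with `R'[t]` preserves the split injection `ι : M → R[t]^(B)`, so `s ⊗ 1` vanishes
iff `ι s ⊗ 1` does. In the free module `R[t]^(B) ⊗ R'[t] ≅ R'[t]^(B)` the element `ι s ⊗ 1` has
coordinates the images of the polynomials `ι s b` in `R'[t]`, and such an image vanishes iff all
its coefficients map to zero in `R'`.
-/

noncomputable section

variable (R R' : Type*) [CommRing R] [CommRing R'] [Algebra R R']

/-- `R'[t]` as an `R[t]`-algebra, via the map induced by `R → R'`. -/
instance polyAlg : Algebra (Polynomial R) (Polynomial R') :=
  (Polynomial.mapRingHom (algebraMap R R')).toAlgebra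

open TensorProduct

theorem TensorProduct.tmul_eq_zero_iff_of_leftInverse {A M N P : Type*} [CommRing A]
    [AddCommGroup M] [Module A M] [AddCommGroup N] [Module A N] [AddCommGroup P] [Module A P]
    (ι : M →ₗ[A] N) (π : N →ₗ[A] M) (hretr : ∀ x, π (ι x) = x) (m : M) (p : P) :
    m ⊗ₜ[A] p = 0 ↔ ι m ⊗ₜ[A] p = 0 := by
  refine ⟨fun h => ?_, fun h => ?_⟩
  · rw [← LinearMap.rTensor_tmul, h, map_zero]
  · rw [← hretr m, ← LinearMap.rTensor_tmul, h, map_zero]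

theorem TensorProduct.finsupp_tmul_eq_zero_iff {A P B : Type*} [CommRing A]
    [AddCommGroup P] [Module A P] (f : B →₀ A) (p : P) :
    f ⊗ₜ[A] p = 0 ↔ ∀ b, f b • p = 0 := by
  classical
  rw [← (finsuppScalarLeft A P B).map_eq_zero_iff, Finsupp.ext_iff]
  simp only [finsuppScalarLeft_apply_tmul_apply, Finsupp.coe_zero, Pi.zero_apply]

theorem polyAlg_smul_one (p : Polynomial R) :
    p • (1 : Polynomial R') = p.map (algebraMap R R') := by
  rw [Algebra.smul_def, mul_one]
  rfl

theorem Polynomial.map_eq_zero_iff_forall_coeff {S : Type*} [Semiring S] {T : Type*} [Semiring T]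
    (f : S →+* T) (p : Polynomial S) : p.map f = 0 ↔ ∀ i, f (p.coeff i) = 0 := by
  simp only [Polynomial.ext_iff, Polynomial.coeff_map, Polynomial.coeff_zero]

theorem stmt_13
    (M : Type*) [AddCommGroup M] [Module (Polynomial R) M]
    (B : Type*) (ι : M →ₗ[Polynomial R] (B →₀ Polynomial R))
    (π : (B →₀ Polynomial R) →ₗ[Polynomial R] M)
    (hretr : ∀ x : M, π (ι x) = x) (s : M) :
    (s ⊗ₜ[Polynomial R] (1 : Polynomial R')
        = (0 : TensorProduct (Polynomial R) M (Polynomial R'))) ↔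
      ∀ (b : B) (i : ℕ), algebraMap R R' ((ι s b).coeff i) = 0 := by
  rw [tmul_eq_zero_iff_of_leftInverse ι π hretr, finsupp_tmul_eq_zero_iff]
  simp only [polyAlg_smul_one, Polynomial.map_eq_zero_iff_forall_coeff]

end
end
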